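/- arXiv:1110.0923 — 3 statements merged into one kernel-verified Lean document; each statement's English description precedes it below -/
import Mathlib

section
/- The full subcategory MT^{φ,N}_K of mixed Tate filtered (φ,N)-modules is closed under kernels and cokernels inside the abelian category of weakly admissible filtered (φ,N)-modules; in particular MT^{φ,N}_K is an abelian category. -/
open scoped TensorProduct
open Function Module

namespace MT

variable (p : ℕ) (K0 K : Type) [Field K0] [Field K] [Algebra K0 K]

variable {M : Type} [AddCommGroup M] [Module K0 M]

/-- The slope-`n` part of a `φ`-module: the `K0`-span of the eigenvectors
`φ m = p^n • m` (which, for modules isomorphic to sums of `(K0, pⁿσ)`,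
is exactly the isoclinic slope-`n` summand). -/
def slopePart (φ : M → M) (n : ℤ) : Submodule K0 M :=
  Submodule.span K0 {m | φ m = (p : K0) ^ n • m}

/-- The sum `M_{≤ i}` of the slope pieces of slope at most `i`. -/
def slopeLE (φ : M → M) (i : ℤ) : Submodule K0 M :=
  ⨆ n : ℤ, ⨆ _ : n ≤ i, slopePart p K0 φ n

/-- The sum `M_{≥ i}` of the slope pieces of slope at least `i`. -/
def slopeGE (φ : M → M) (i : ℤ) : Submodule K0 M :=
  ⨆ n : ℤ, ⨆ _ : i ≤ n, slopePart p K0 φ n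

/-- The (generalized) slope-`a/b` part of a `φ`-module. -/
def slopePartQ (φ : M → M) (a : ℤ) (b : ℕ) : Submodule K0 M :=
  Submodule.span K0 {m | φ^[b] m = (p : K0) ^ a • m}

/-- `φ` is a `σ`-semilinear bijection. -/
structure IsSemilinear (σ : K0 →+* K0) (φ : M → M) : Prop where
  map_add : ∀ x y, φ (x + y) = φ x + φ y
  map_smul : ∀ (c : K0) (x : M), φ (c • x) = σ c • φ x
  bijective : Function.Bijective φ

/-- A mixed Tate filtered `φ`-module: condition (1) says that `(M, φ)` is a direct
sum of its integral slope parts (equivalently `(M,φ) ≅ ⊕ (K0, p^{n_i}σ)`), and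
condition (2) says that for each `i` the natural projection `F^i M_K → M_{≥ i} ⊗ K`
is an isomorphism, i.e. `F^i` is a complement of `M_{< i} ⊗ K` in `M_K`. -/
structure IsMixedTate (φ : M → M) (F : ℤ → Submodule K (K ⊗[K0] M)) : Prop where
  internal : DirectSum.IsInternal (fun n : ℤ => slopePart p K0 φ n)
  antitone : Antitone F
  compl : ∀ i : ℤ, IsCompl (F i) ((slopeLE p K0 φ (i - 1)).baseChange K)

/-- The Newton number of a `φ`-stable subspace (sum of slopes). -/
noncomputable def tN (φ : M → M) (M' : Submodule K0 M) : ℤ :=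
  ∑ᶠ n : ℤ, n * (Module.finrank K0 ↥(M' ⊓ slopePart p K0 φ n) : ℤ)

/-- The Hodge number of a subspace, for the induced filtration. -/
noncomputable def tH (F : ℤ → Submodule K (K ⊗[K0] M)) (M' : Submodule K0 M) : ℤ :=
  ∑ᶠ i : ℤ, i * ((Module.finrank K ↥(F i ⊓ M'.baseChange K) : ℤ) -
    (Module.finrank K ↥(F (i + 1) ⊓ M'.baseChange K) : ℤ))

/-- Weak admissibility: `t_H = t_N` on the whole module and `t_H ≤ t_N` on every
`φ`-stable and `N`-stable subspace (with the induced filtration). -/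
def WeaklyAdmissible (φ : M → M) (N : M →ₗ[K0] M)
    (F : ℤ → Submodule K (K ⊗[K0] M)) : Prop :=
  tH K0 K F ⊤ = tN p K0 φ ⊤ ∧
  ∀ M' : Submodule K0 M, (∀ m ∈ M', φ m ∈ M') → (∀ m ∈ M', N m ∈ M') →
    tH K0 K F M' ≤ tN p K0 φ M'

/-- The defining property of the automorphism `η` of `M_K` attached to a mixed Tate
filtered `φ`-module: on the slope-`i` part, `η x` is the unique element of `F^i M_K`
projecting to `x` along `M_{< i} ⊗ K`. -/
def IsEta (φ : M → M) (F : ℤ → Submodule K (K ⊗[K0] M))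
    (η : (K ⊗[K0] M) →ₗ[K] K ⊗[K0] M) : Prop :=
  ∀ i : ℤ, ∀ x ∈ (slopePart p K0 φ i).baseChange K,
    η x ∈ F i ∧ η x - x ∈ (slopeLE p K0 φ (i - 1)).baseChange K

/-! Kernels and cokernels of morphisms of mixed Tate modules can be computed slope by slope: a
morphism respects the slope decompositions, so its kernel and image are sums of their slope
components. For the kernel, a `φ`-stable subspace of a slope part is spanned by its own
eigenvectors (a Hilbert 90 type descent for the semilinear `φ`), so the kernel has the expected
slope parts. For the cokernel, a vector of slope `j` that is an eigenvector of slope `n ≠ j` modulo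
a `φ`-stable subspace already lies in that subspace, because distinct slope parts are independent;
hence slope parts of the cokernel are images of slope parts. The condition
`F^i ⊕ (M_{<i} ⊗ K) = M_K` then passes to kernels and cokernels by a diagram chase, using that
`K ⊗[K0] -` is exact and respects the splitting `M = M_{<i} ⊕ M_{≥i}`. -/

section Graded

variable {R ι X Y : Type*} [Ring R] [AddCommGroup X] [Module R X] [AddCommGroup Y] [Module R Y]

lemma iSupIndep_of_map_injective {f : X →ₗ[R] Y} (hf : Injective f) {S : ι → Submodule R X}
    (h : iSupIndep fun i => (S i).map f) : iSupIndep S := by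
  intro i
  rw [disjoint_iff, ← (Submodule.map_injective_of_injective hf).eq_iff, Submodule.map_inf _ hf,
    Submodule.map_bot]
  simpa only [Submodule.map_iSup] using (h i).eq_bot

lemma iSupIndep_map_of_ker_le {S : ι → Submodule R X} (hS : iSupIndep S) {f : X →ₗ[R] Y}
    (hker : LinearMap.ker f ≤ ⨆ i, S i ⊓ LinearMap.ker f) :
    iSupIndep fun i => (S i).map f := by
  intro i
  set B := ⨆ (j) (_ : j ≠ i), S j
  have hkerB : LinearMap.ker f ≤ B ⊔ (S i ⊓ LinearMap.ker f) := by
    refine hker.trans ?_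
    rw [iSup_split_single _ i, sup_comm]
    exact sup_le_sup_right (iSup₂_mono fun j _ => inf_le_left) _
  simp only [← Submodule.map_iSup]
  rw [disjoint_iff, Submodule.map_inf_eq_map_inf_comap, Submodule.comap_map_eq, eq_bot_iff,
    Submodule.map_le_iff_le_comap, Submodule.comap_bot]
  calc S i ⊓ (B ⊔ LinearMap.ker f) ≤ S i ⊓ (B ⊔ (S i ⊓ LinearMap.ker f)) :=
        inf_le_inf_left _ (sup_le le_sup_left hkerB)
    _ = S i ⊓ B ⊔ S i ⊓ LinearMap.ker f := (inf_sup_assoc_of_le _ inf_le_left).symm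
    _ ≤ LinearMap.ker f := by rw [(hS i).eq_bot, bot_sup_eq]; exact inf_le_right

lemma ker_le_iSup_inf_ker {S : ι → Submodule R X} {T : ι → Submodule R Y}
    (hS : ⨆ i, S i = ⊤) (hT : iSupIndep T) {f : X →ₗ[R] Y} (hf : ∀ i, (S i).map f ≤ T i) :
    LinearMap.ker f ≤ ⨆ i, S i ⊓ LinearMap.ker f := by
  classical
  intro x hx
  obtain ⟨v, hv, rfl⟩ := (Submodule.mem_iSup_iff_exists_finsupp S x).mp (hS ▸ Submodule.mem_top)
  have hfv : ∀ i ∈ v.support, f (v i) = 0 :=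
    (iSupIndep_iff_finsetSum_eq_zero_imp_eq_zero T).mp hT v.support (fun i => f (v i))
      (fun i _ => hf i ⟨v i, hv i, rfl⟩) (by simpa [Finsupp.sum, map_sum] using hx)
  exact Submodule.sum_mem _ fun i hi => Submodule.mem_iSup_of_mem i ⟨hv i, hfv i hi⟩

lemma range_le_iSup_inf_range {S : ι → Submodule R X} {T : ι → Submodule R Y}
    (hS : ⨆ i, S i = ⊤) {f : X →ₗ[R] Y} (hf : ∀ i, (S i).map f ≤ T i) :
    LinearMap.range f ≤ ⨆ i, T i ⊓ LinearMap.range f := by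
  calc LinearMap.range f = ⨆ i, (S i).map f := by
        rw [LinearMap.range_eq_map, ← hS, Submodule.map_iSup]
    _ ≤ _ := iSup_mono fun i => le_inf (hf i) LinearMap.map_le_range

lemma mem_of_sum_mem {S : ι → Submodule R X} (hS : iSupIndep S) {N : Submodule R X}
    (hN : N ≤ ⨆ i, S i ⊓ N) {s : Finset ι} {v : ι → X} (hv : ∀ i, v i ∈ S i)
    (hs : ∀ i ∉ s, v i = 0) (hsum : ∑ i ∈ s, v i ∈ N) (i : ι) : v i ∈ N := by
  classical
  obtain ⟨w, hw, hwv⟩ := (Submodule.mem_iSup_iff_exists_finsupp _ _).mp (hN hsum)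
  set t := s ∪ w.support
  have hvw : ∀ j ∈ t, v j = w j :=
    (iSupIndep_iff_finsetSum_eq_imp_eq S).mp hS t v w (fun j _ => ⟨hv j, (hw j).1⟩) <| by
      rw [← Finset.sum_subset Finset.subset_union_left fun j _ hj => hs j hj, ← hwv,
        w.sum_of_support_subset Finset.subset_union_right _ fun _ _ => rfl]
  by_cases hi : i ∈ t
  · exact hvw i hi ▸ (hw i).2
  · rw [hs i fun h => hi (Finset.mem_union_left _ h)]
    exact N.zero_mem

lemma map_biSup_le (f : X →ₗ[R] Y) {S : ι → Submodule R X} {T : ι → Submodule R Y}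
    (hf : ∀ i, (S i).map f ≤ T i) (P : ι → Prop) :
    (⨆ (i) (_ : P i), S i).map f ≤ ⨆ (i) (_ : P i), T i := by
  simpa only [Submodule.map_iSup] using iSup₂_mono fun i _ => hf i

lemma isCompl_biSup_compl {S : ι → Submodule R X} (hS : iSupIndep S) (htop : ⨆ i, S i = ⊤)
    (s : Set ι) : IsCompl (⨆ i ∈ s, S i) (⨆ i ∈ sᶜ, S i) :=
  ⟨hS.disjoint_biSup_biSup disjoint_compl_right, codisjoint_iff.mpr <| by
    rw [← iSup_union, Set.union_compl_self, iSup_univ, htop]⟩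

end Graded

section Exact

variable {R X Y Z : Type*} [Ring R] [AddCommGroup X] [Module R X] [AddCommGroup Y] [Module R Y]
  [AddCommGroup Z] [Module R Z]

lemma isCompl_comap_of_exact {ι : Z →ₗ[R] X} {f : X →ₗ[R] Y} (hι : Injective ι) (hex : Exact ι f)
    {A B : Submodule R X} {A' B' : Submodule R Y} (h : IsCompl A B) (h' : Disjoint A' B')
    (hA : A.map f ≤ A') (hB : B.map f ≤ B') : IsCompl (A.comap ι) (B.comap ι) := by
  refine ⟨?_, codisjoint_iff_le_sup.mpr fun z _ => ?_⟩
  · rw [disjoint_iff, ← Submodule.comap_inf, h.inf_eq_bot, Submodule.comap_bot,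
      LinearMap.ker_eq_bot.mpr hι]
  obtain ⟨a, ha, b, hb, hab⟩ :=
    Submodule.mem_sup.mp (h.sup_eq_top ▸ Submodule.mem_top : ι z ∈ A ⊔ B)
  have hfab : f a + f b = 0 := by rw [← map_add, hab, hex.apply_apply_eq_zero]
  have hfa : f a = 0 := Submodule.disjoint_def.mp h' _ (hA ⟨a, ha, rfl⟩)
    (by rw [eq_neg_of_add_eq_zero_left hfab]; exact neg_mem (hB ⟨b, hb, rfl⟩))
  obtain ⟨a', rfl⟩ := (hex a).mp hfa
  obtain ⟨b', rfl⟩ := (hex b).mp (by rwa [hfa, zero_add] at hfab)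
  exact Submodule.mem_sup.mpr ⟨a', ha, b', hb, hι (by rw [map_add, hab])⟩

lemma isCompl_map_of_exact {f : X →ₗ[R] Y} {π : Y →ₗ[R] Z} (hπ : Surjective π) (hex : Exact f π)
    {A B : Submodule R X} {A' B' : Submodule R Y} (h : Codisjoint A B) (h' : IsCompl A' B')
    (hA : A.map f ≤ A') (hB : B.map f ≤ B') : IsCompl (A'.map π) (B'.map π) := by
  refine ⟨Submodule.disjoint_def.mpr ?_, ?_⟩
  · rintro _ ⟨u, hu, rfl⟩ ⟨v, hv, hvu⟩
    obtain ⟨w, hw⟩ := (hex (u - v)).mp (by rw [map_sub, hvu, sub_self])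
    obtain ⟨a, ha, b, hb, rfl⟩ := Submodule.mem_sup.mp (h.eq_top ▸ Submodule.mem_top : w ∈ A ⊔ B)
    have hsplit : u - f a = v + f b := by
      rw [map_add, eq_sub_iff_add_eq] at hw; rw [← hw]; abel
    have h0 : u - f a = 0 := Submodule.disjoint_def.mp h'.disjoint _
      (sub_mem hu (hA ⟨a, ha, rfl⟩)) (hsplit ▸ add_mem hv (hB ⟨b, hb, rfl⟩))
    rw [sub_eq_zero.mp h0]
    exact hex.apply_apply_eq_zero a
  · rw [codisjoint_iff, ← Submodule.map_sup, h'.sup_eq_top, Submodule.map_top,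
      LinearMap.range_eq_top.mpr hπ]

lemma comap_eq_of_isCompl {j : X →ₗ[R] Y} (hj : Injective j) {A A' : Submodule R X}
    {B B' : Submodule R Y} (hA : IsCompl A A') (hB : Disjoint B B') (hAB : A.map j ≤ B)
    (hAB' : A'.map j ≤ B') : B.comap j = A := by
  refine le_antisymm (fun x hx => ?_) (Submodule.map_le_iff_le_comap.mp hAB)
  obtain ⟨a, ha, a', ha', rfl⟩ :=
    Submodule.mem_sup.mp (hA.sup_eq_top ▸ Submodule.mem_top : x ∈ A ⊔ A')
  have hja' : j a' = 0 := Submodule.disjoint_def.mp hB _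
    (by simpa using sub_mem hx (hAB ⟨a, ha, rfl⟩)) (hAB' ⟨a', ha', rfl⟩)
  rw [(map_eq_zero_iff j hj).mp hja', add_zero]
  exact ha

end Exact

section BaseChange

variable {R A X Y Z : Type*} [CommRing R] [CommRing A] [Algebra R A] [AddCommGroup X] [Module R X]
  [AddCommGroup Y] [Module R Y] [AddCommGroup Z] [Module R Z]

lemma map_baseChange (g : X →ₗ[R] Y) (q : Submodule R X) :
    (q.baseChange A).map (g.baseChange A) = (q.map g).baseChange A := by
  simp only [Submodule.baseChange_eq_span, Submodule.map_span, Submodule.map_coe, Set.image_image,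
    TensorProduct.mk_apply, LinearMap.baseChange_tmul]

lemma baseChange_sup (P Q : Submodule R X) :
    (P ⊔ Q).baseChange A = P.baseChange A ⊔ Q.baseChange A := by
  rw [← P.span_eq, ← Q.span_eq, ← Submodule.span_union, Submodule.baseChange_span,
    Submodule.baseChange_span, Submodule.baseChange_span, Set.image_union, Submodule.span_union]

lemma isCompl_baseChange {P Q : Submodule R X} (h : IsCompl P Q) :
    IsCompl (P.baseChange A) (Q.baseChange A) := by
  set pr := P.projection Q h
  have hP : pr ∘ₗ P.subtype = P.subtype := by ext x; simp [pr]
  have hQ : pr ∘ₗ Q.subtype = 0 := by ext x; simp [pr]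
  refine ⟨Submodule.disjoint_def.mpr ?_, ?_⟩
  · rintro _ ⟨x, rfl⟩ ⟨y, hy⟩
    calc P.subtype.baseChange A x = (pr ∘ₗ P.subtype).baseChange A x := by rw [hP]
      _ = pr.baseChange A (Q.subtype.baseChange A y) := by
        rw [LinearMap.baseChange_comp, LinearMap.comp_apply, hy]
      _ = 0 := by
        rw [← LinearMap.comp_apply, ← LinearMap.baseChange_comp, hQ, LinearMap.baseChange_zero,
          LinearMap.zero_apply]
  · rw [codisjoint_iff, ← baseChange_sup, h.sup_eq_top, Submodule.baseChange_top]

lemma map_baseChange_le (g : X →ₗ[R] Y) {P : Submodule R X} {Q : Submodule R Y}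
    (h : P.map g ≤ Q) : (P.baseChange A).map (g.baseChange A) ≤ Q.baseChange A :=
  (map_baseChange g P).trans_le (Submodule.baseChange_mono A h)

variable (A) in
lemma exact_baseChange [Module.Flat R A] {f : X →ₗ[R] Y} {g : Y →ₗ[R] Z} (h : Exact f g) :
    Exact (f.baseChange A) (g.baseChange A) := by
  simpa only [← LinearMap.baseChange_eq_ltensor] using Module.Flat.lTensor_exact A h

end BaseChange

section Eigen

variable {K0} {V V' : Type} [AddCommGroup V] [Module K0 V] [AddCommGroup V'] [Module K0 V']

/-- The eigenvectors of a semilinear `φ` form a vector space only over the fixed field of `σ`.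
`slopePart p K0 φ n` is `eigenSpan φ (p ^ n)` by definition. -/
def eigenSpan (φ : V → V) (c : K0) : Submodule K0 V :=
  Submodule.span K0 {m | φ m = c • m}

lemma map_eigenSpan_le {φ : V → V} {ψ : V' → V'} (g : V →ₗ[K0] V') (hg : ∀ v, g (φ v) = ψ (g v))
    (c : K0) : (eigenSpan φ c).map g ≤ eigenSpan ψ c := by
  rw [eigenSpan, Submodule.map_span, Submodule.span_le]
  rintro _ ⟨v, hv, rfl⟩
  exact Submodule.subset_span (show ψ (g v) = c • g v by rw [← hg, hv, map_smul])

variable {σ : K0 →+* K0}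

lemma eigenSpan_le_comap (φ : V →ₛₗ[σ] V) (c : K0) : eigenSpan φ c ≤ (eigenSpan φ c).comap φ :=
  Submodule.span_le.mpr fun v (hv : φ v = c • v) => by
    simpa [hv] using (eigenSpan φ c).smul_mem c (Submodule.subset_span hv)

lemma apply_sub_smul_sum_eq (φ : V →ₛₗ[σ] V) {c : K0} {s : Finset V}
    (hs : ↑s ⊆ {m | φ m = c • m}) (b : V → K0) :
    φ (∑ v ∈ s, b v • v) - c • ∑ v ∈ s, b v • v = ∑ v ∈ s, ((σ (b v) - b v) * c) • v := by
  simp only [map_sum, LinearMap.map_smulₛₗ, Finset.smul_sum, ← Finset.sum_sub_distrib]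
  refine Finset.sum_congr rfl fun v hv => ?_
  rw [show φ v = c • v from hs hv, smul_smul, smul_smul, ← sub_smul, sub_mul, mul_comm c]

lemma le_span_inter_eigenvectors (φ : V →ₛₗ[σ] V) (c : K0) {W : Submodule K0 V}
    (hWφ : W ≤ W.comap φ) (hW : W ≤ eigenSpan φ c) :
    W ≤ Submodule.span K0 (W ∩ {m | φ m = c • m}) := by
  classical
  set E := {m | φ m = c • m}
  suffices key : ∀ s : Finset V, ↑s ⊆ E → ∀ a : V → K0,
      ∑ v ∈ s, a v • v ∈ W → ∑ v ∈ s, a v • v ∈ Submodule.span K0 (W ∩ E) by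
    intro x hx
    obtain ⟨s, hsE, hxs⟩ := Submodule.mem_span_finite_of_mem_span (hW hx)
    obtain ⟨a, -, rfl⟩ := Submodule.mem_span_finset.mp hxs
    exact key s hsE a hx
  intro s
  induction s using Finset.strongInduction with | H s ih => ?_
  intro hsE a hx
  have reduce : ∀ b : V → K0, ∀ v ∈ s, b v = 0 → ∑ w ∈ s, b w • w ∈ W →
      ∑ w ∈ s, b w • w ∈ Submodule.span K0 (W ∩ E) := by
    intro b v hv hbv hb
    rw [← Finset.sum_erase s (by rw [hbv, zero_smul])] at hb ⊢
    exact ih _ (Finset.erase_ssubset hv) ((Finset.coe_subset.mpr (s.erase_subset v)).trans hsE) b hb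
  obtain rfl | ⟨v₀, hv₀⟩ := s.eq_empty_or_nonempty
  · simp
  by_cases ha₀ : a v₀ = 0
  · exact reduce a v₀ hv₀ ha₀ hx
  set b : V → K0 := fun v => (a v₀)⁻¹ * a v
  have hab : ∑ v ∈ s, a v • v = a v₀ • ∑ v ∈ s, b v • v := by
    simp only [b, Finset.smul_sum, smul_smul, ← mul_assoc, mul_inv_cancel₀ ha₀, one_mul]
  rw [hab] at hx ⊢
  refine Submodule.smul_mem _ _ ?_
  set x := ∑ v ∈ s, b v • v
  have hxW : x ∈ W := (Submodule.smul_mem_iff _ ha₀).mp hx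
  set d : V → K0 := fun v => (σ (b v) - b v) * c
  have hy : φ x - c • x = ∑ v ∈ s, d v • v := apply_sub_smul_sum_eq φ hsE b
  have hyW : ∑ v ∈ s, d v • v ∈ W := hy ▸ sub_mem (hWφ hxW) (W.smul_mem c hxW)
  -- `b v₀ = 1` is fixed by `σ`, so `φ x - c • x` involves fewer eigenvectors than `x`
  have hyE := reduce d v₀ hv₀
    (by simp only [d, b, inv_mul_cancel₀ ha₀, map_one, sub_self, zero_mul]) hyW
  by_cases hd : ∀ v ∈ s, d v = 0
  · refine Submodule.subset_span ⟨hxW, sub_eq_zero.mp ?_⟩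
    rw [hy]
    exact Finset.sum_eq_zero fun v hv => by rw [hd v hv, zero_smul]
  push Not at hd
  obtain ⟨v₁, hv₁, hdv₁⟩ := hd
  set t := b v₁ / d v₁
  have hsplit : x = ∑ v ∈ s, (b v - t * d v) • v + t • ∑ v ∈ s, d v • v := by
    simp only [x, sub_smul, Finset.sum_sub_distrib, Finset.smul_sum, smul_smul, sub_add_cancel]
  rw [hsplit] at hxW ⊢
  refine add_mem (reduce _ v₁ hv₁ (by simp [t, div_mul_cancel₀ _ hdv₁]) ?_)
    (Submodule.smul_mem _ _ hyE)
  simpa using sub_mem hxW (W.smul_mem t hyW)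

lemma mem_of_apply_sub_smul_mem (φ : V →ₛₗ[σ] V) {α β : K0}
    (hαβ : Disjoint (eigenSpan φ α) (eigenSpan φ β)) {R : Submodule K0 V} (hRφ : R ≤ R.comap φ)
    {m : V} (hm : m ∈ eigenSpan φ α) (hmR : φ m - β • m ∈ R) : m ∈ R := by
  by_contra hmR'
  set A := eigenSpan φ α
  have hAφ := eigenSpan_le_comap φ α
  set W := R ⊓ A ⊔ K0 ∙ m
  have hmW : m ∈ W := Submodule.mem_sup_right (Submodule.mem_span_singleton_self m)
  have hWA : W ≤ A := sup_le inf_le_right ((Submodule.span_singleton_le_iff_mem _ _).mpr hm)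
  have hWφ : W ≤ W.comap φ := by
    refine sup_le (fun r hr => Submodule.mem_sup_left ⟨hRφ hr.1, hAφ hr.2⟩) ?_
    rw [Submodule.span_singleton_le_iff_mem, Submodule.mem_comap, ← sub_add_cancel (φ m) (β • m)]
    exact add_mem (Submodule.mem_sup_left ⟨hmR, sub_mem (hAφ hm) (A.smul_mem β hm)⟩)
      (W.smul_mem β hmW)
  obtain ⟨e, ⟨heW, heE⟩, heR⟩ : ∃ e ∈ (W : Set V) ∩ {v | φ v = α • v}, e ∉ R := by
    by_contra! hno
    exact hmR' (Submodule.span_le.mpr hno (le_span_inter_eigenvectors φ α hWφ hWA hmW))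
  obtain ⟨r, hr, _, hz, rfl⟩ := Submodule.mem_sup.mp heW
  obtain ⟨a, rfl⟩ := Submodule.mem_span_singleton.mp hz
  have ha : a ≠ 0 := by rintro rfl; exact heR (by simpa using hr.1)
  have heE' : φ r + σ a • φ m = α • r + (α * a) • m := by
    simpa [smul_add, smul_smul] using heE
  -- comparing coefficients of `m` in `φ e = α • e`
  have hcoef : (σ a * β - α * a) • m ∈ R := by
    have : (σ a * β - α * a) • m = (α • r - φ r) - σ a • (φ m - β • m) := by
      linear_combination (norm := module) heE'
    rw [this]
    exact sub_mem (sub_mem (R.smul_mem α hr.1) (hRφ hr.1)) (R.smul_mem _ hmR)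
  have hσa : σ a * β = α * a := by
    by_contra hne
    exact hmR' ((Submodule.smul_mem_iff _ (sub_ne_zero.mpr hne)).mp hcoef)
  have hβ : a⁻¹ • (r + a • m) ∈ eigenSpan φ β := Submodule.subset_span <| by
    show φ (a⁻¹ • (r + a • m)) = β • a⁻¹ • (r + a • m)
    have hσa₀ : σ a ≠ 0 := (map_ne_zero σ).mpr ha
    rw [map_smulₛₗ, heE, smul_smul, smul_smul, map_inv₀]
    congr 1
    field_simp
    linear_combination -hσa
  have h0 := Submodule.disjoint_def.mp hαβ _ (A.smul_mem _ (hWA heW)) hβ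
  rw [smul_eq_zero, inv_eq_zero] at h0
  exact heR (h0.resolve_left ha ▸ R.zero_mem)

end Eigen

section Slopes

variable {p K0 K} {σ : K0 →+* K0}

def IsSemilinear.toSemilinearMap {φ : M → M} (hφ : IsSemilinear K0 σ φ) : M →ₛₗ[σ] M where
  toFun := φ
  map_add' := hφ.map_add
  map_smul' := hφ.map_smul

lemma isCompl_slopeLE_slopeGE {φ : M → M} (h : DirectSum.IsInternal (slopePart p K0 φ)) (i : ℤ) :
    IsCompl (slopeLE p K0 φ (i - 1)) (slopeGE p K0 φ i) := by
  have hGE : slopeGE p K0 φ i = ⨆ n ∈ (Set.Iic (i - 1))ᶜ, slopePart p K0 φ n :=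
    iSup_congr fun n => iSup_congr_Prop (by simp) fun _ => rfl
  rw [hGE]
  exact isCompl_biSup_compl h.submodule_iSupIndep h.submodule_iSup_eq_top _

variable {L : Type} [AddCommGroup L] [Module K0 L]

lemma map_slopeLE_le {φ : M → M} {ψ : L → L} (g : M →ₗ[K0] L) (hg : ∀ m, g (φ m) = ψ (g m))
    (i : ℤ) : (slopeLE p K0 φ i).map g ≤ slopeLE p K0 ψ i :=
  map_biSup_le g (fun _ => map_eigenSpan_le g hg _) _

lemma map_slopeGE_le {φ : M → M} {ψ : L → L} (g : M →ₗ[K0] L) (hg : ∀ m, g (φ m) = ψ (g m))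
    (i : ℤ) : (slopeGE p K0 φ i).map g ≤ slopeGE p K0 ψ i :=
  map_biSup_le g (fun _ => map_eigenSpan_le g hg _) _

lemma map_slopePart_of_injective (φ : M →ₛₗ[σ] M) {φL : L → L} {ι : L →ₗ[K0] M}
    (hι : Injective ι) (hιφ : ∀ l, ι (φL l) = φ (ι l))
    (hφι : LinearMap.range ι ≤ (LinearMap.range ι).comap φ) (n : ℤ) :
    (slopePart p K0 φL n).map ι = slopePart p K0 φ n ⊓ LinearMap.range ι := by
  refine le_antisymm (le_inf (map_eigenSpan_le ι hιφ _) LinearMap.map_le_range) ?_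
  have hWφ : slopePart p K0 φ n ⊓ LinearMap.range ι
      ≤ (slopePart p K0 φ n ⊓ LinearMap.range ι).comap φ := by
    rw [Submodule.comap_inf]
    exact inf_le_inf (eigenSpan_le_comap φ _) hφι
  refine (le_span_inter_eigenvectors φ _ hWφ inf_le_left).trans (Submodule.span_le.mpr ?_)
  rintro _ ⟨⟨-, l, rfl⟩, hl⟩
  exact ⟨l, Submodule.subset_span (hι (by rw [hιφ, map_smul]; exact hl)), rfl⟩

lemma isInternal_slopePart_of_injective (φ : M →ₛₗ[σ] M)
    (h : DirectSum.IsInternal (slopePart p K0 φ)) {φL : L → L} {ι : L →ₗ[K0] M}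
    (hι : Injective ι) (hιφ : ∀ l, ι (φL l) = φ (ι l))
    (hφι : LinearMap.range ι ≤ (LinearMap.range ι).comap φ)
    (hhom : LinearMap.range ι ≤ ⨆ n, slopePart p K0 φ n ⊓ LinearMap.range ι) :
    DirectSum.IsInternal (slopePart p K0 φL) := by
  have hmap := map_slopePart_of_injective (p := p) φ hι hιφ hφι
  refine DirectSum.isInternal_submodule_of_iSupIndep_of_iSup_eq_top
    (iSupIndep_of_map_injective hι ?_) (Submodule.map_injective_of_injective hι ?_)
  · simpa only [hmap] using h.submodule_iSupIndep.mono fun n => inf_le_left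
  · rw [Submodule.map_iSup, Submodule.map_top]
    simpa only [hmap] using le_antisymm (iSup_le fun n => inf_le_right) hhom

lemma slopePart_eq_map_of_surjective (φ : M →ₛₗ[σ] M)
    (h : DirectSum.IsInternal (slopePart p K0 φ)) {φQ : L → L} {π : M →ₗ[K0] L}
    (hπ : Surjective π) (hπφ : ∀ m, π (φ m) = φQ (π m))
    (hφπ : LinearMap.ker π ≤ (LinearMap.ker π).comap φ)
    (hhom : LinearMap.ker π ≤ ⨆ n, slopePart p K0 φ n ⊓ LinearMap.ker π) (n : ℤ) :
    slopePart p K0 φQ n = (slopePart p K0 φ n).map π := by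
  have hind := h.submodule_iSupIndep
  refine le_antisymm (Submodule.span_le.mpr fun q hq => ?_) (map_eigenSpan_le π hπφ _)
  obtain ⟨m, rfl⟩ := hπ q
  obtain ⟨l, hl, rfl⟩ :=
    (Submodule.mem_iSup_iff_exists_finsupp _ m).mp (h.submodule_iSup_eq_top ▸ Submodule.mem_top)
  have hcomp : ∀ j, φ (l j) - (p : K0) ^ n • l j ∈ LinearMap.ker π := by
    refine mem_of_sum_mem hind hhom (s := l.support)
      (fun j => sub_mem (eigenSpan_le_comap φ _ (hl j)) (Submodule.smul_mem _ _ (hl j)))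
      (fun j hj => by simp [Finsupp.notMem_support_iff.mp hj]) ?_
    have hq' : φQ (π (l.sum fun _ x => x)) = (p : K0) ^ n • π (l.sum fun _ x => x) := hq
    simp only [Finsupp.sum] at hq'
    simp [Finset.sum_sub_distrib, ← Finset.smul_sum, ← map_sum, hπφ, hq']
  have hker : ∀ j ≠ n, π (l j) = 0 := fun j hj =>
    mem_of_apply_sub_smul_mem φ (hind.pairwiseDisjoint hj) hφπ (hl j) (hcomp j)
  refine ⟨l n, hl n, ?_⟩
  rw [Finsupp.sum, map_sum, Finset.sum_eq_single n (fun j _ hj => hker j hj)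
    (fun hn => by rw [Finsupp.notMem_support_iff.mp hn, map_zero])]

lemma isInternal_slopePart_of_surjective (φ : M →ₛₗ[σ] M)
    (h : DirectSum.IsInternal (slopePart p K0 φ)) {φQ : L → L} {π : M →ₗ[K0] L}
    (hπ : Surjective π) (hπφ : ∀ m, π (φ m) = φQ (π m))
    (hφπ : LinearMap.ker π ≤ (LinearMap.ker π).comap φ)
    (hhom : LinearMap.ker π ≤ ⨆ n, slopePart p K0 φ n ⊓ LinearMap.ker π) :
    DirectSum.IsInternal (slopePart p K0 φQ) := by
  have hmap : slopePart p K0 φQ = fun n => (slopePart p K0 φ n).map π :=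
    funext (slopePart_eq_map_of_surjective φ h hπ hπφ hφπ hhom)
  refine DirectSum.isInternal_submodule_of_iSupIndep_of_iSup_eq_top
    (hmap ▸ iSupIndep_map_of_ker_le h.submodule_iSupIndep hhom) ?_
  rw [hmap, ← Submodule.map_iSup, h.submodule_iSup_eq_top, Submodule.map_top,
    LinearMap.range_eq_top.mpr hπ]

end Slopes

section Morphisms

variable {p K0 K} {σ : K0 →+* K0} {M' : Type} [AddCommGroup M'] [Module K0 M']
  {L : Type} [AddCommGroup L] [Module K0 L] {Q : Type} [AddCommGroup Q] [Module K0 Q]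

theorem isMixedTate_of_ker (φ : M →ₛₗ[σ] M) (φ' : M' →ₛₗ[σ] M')
    {F : ℤ → Submodule K (K ⊗[K0] M)} {F' : ℤ → Submodule K (K ⊗[K0] M')}
    (h : IsMixedTate p K0 K φ F) (h' : IsMixedTate p K0 K φ' F') (f : M →ₗ[K0] M')
    (hfφ : ∀ m, f (φ m) = φ' (f m)) (hfF : ∀ i, (F i).map (f.baseChange K) ≤ F' i)
    {ι : L →ₗ[K0] M} {φL : L → L} {FL : ℤ → Submodule K (K ⊗[K0] L)} (hι : Injective ι)
    (hrange : LinearMap.range ι = LinearMap.ker f) (hιφ : ∀ l, ι (φL l) = φ (ι l))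
    (hFL : ∀ i, FL i = (F i).comap (ι.baseChange K)) : IsMixedTate p K0 K φL FL := by
  have hφι : LinearMap.range ι ≤ (LinearMap.range ι).comap φ := by
    rw [hrange]
    intro m hm
    rw [Submodule.mem_comap, LinearMap.mem_ker, hfφ, LinearMap.mem_ker.mp hm, map_zero]
  have hhom := hrange ▸ ker_le_iSup_inf_ker h.internal.submodule_iSup_eq_top
    h'.internal.submodule_iSupIndep fun n => map_eigenSpan_le f hfφ _
  have hL := isInternal_slopePart_of_injective φ h.internal hι hιφ hφι hhom
  have hιK : Injective (ι.baseChange K) := by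
    rw [LinearMap.baseChange_eq_ltensor]
    exact Module.Flat.lTensor_preserves_injective_linearMap ι hι
  have hexK := exact_baseChange K (LinearMap.exact_iff.mpr hrange.symm)
  refine ⟨hL, fun i j hij => ?_, fun i => ?_⟩
  · rw [hFL, hFL]
    exact Submodule.comap_mono (h.antitone hij)
  have hLE : ((slopeLE p K0 φ (i - 1)).baseChange K).comap (ι.baseChange K)
      = (slopeLE p K0 φL (i - 1)).baseChange K :=
    comap_eq_of_isCompl hιK (isCompl_baseChange (isCompl_slopeLE_slopeGE hL i))
      (isCompl_baseChange (isCompl_slopeLE_slopeGE h.internal i)).disjoint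
      (map_baseChange_le ι (map_slopeLE_le ι hιφ _)) (map_baseChange_le ι (map_slopeGE_le ι hιφ _))
  rw [hFL, ← hLE]
  exact isCompl_comap_of_exact hιK hexK (h.compl i) (h'.compl i).disjoint (hfF i)
    (map_baseChange_le f (map_slopeLE_le f hfφ _))

theorem isMixedTate_of_coker (φ : M → M) (φ' : M' →ₛₗ[σ] M')
    {F : ℤ → Submodule K (K ⊗[K0] M)} {F' : ℤ → Submodule K (K ⊗[K0] M')}
    (h : IsMixedTate p K0 K φ F) (h' : IsMixedTate p K0 K φ' F') (f : M →ₗ[K0] M')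
    (hfφ : ∀ m, f (φ m) = φ' (f m)) (hfF : ∀ i, (F i).map (f.baseChange K) ≤ F' i)
    {π : M' →ₗ[K0] Q} {φQ : Q → Q} {FQ : ℤ → Submodule K (K ⊗[K0] Q)} (hπ : Surjective π)
    (hker : LinearMap.ker π = LinearMap.range f) (hπφ : ∀ m, π (φ' m) = φQ (π m))
    (hFQ : ∀ i, FQ i = (F' i).map (π.baseChange K)) : IsMixedTate p K0 K φQ FQ := by
  have hφπ : LinearMap.ker π ≤ (LinearMap.ker π).comap φ' := by
    rw [hker]
    rintro _ ⟨m, rfl⟩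
    exact ⟨φ m, hfφ m⟩
  have hhom := hker ▸ range_le_iSup_inf_range h.internal.submodule_iSup_eq_top
    fun n => map_eigenSpan_le f hfφ _
  have hπK : Surjective (π.baseChange K) := by
    rw [LinearMap.baseChange_eq_ltensor]
    exact LinearMap.lTensor_surjective K hπ
  have hexK := exact_baseChange K (LinearMap.exact_iff.mpr hker)
  refine ⟨isInternal_slopePart_of_surjective φ' h'.internal hπ hπφ hφπ hhom,
    fun i j hij => ?_, fun i => ?_⟩
  · rw [hFQ, hFQ]
    exact Submodule.map_mono (h'.antitone hij)
  have hLE : (slopeLE p K0 φQ (i - 1)).baseChange K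
      = ((slopeLE p K0 φ' (i - 1)).baseChange K).map (π.baseChange K) := by
    simp only [map_baseChange, slopeLE, Submodule.map_iSup,
      slopePart_eq_map_of_surjective φ' h'.internal hπ hπφ hφπ hhom]
  rw [hFQ, hLE]
  exact isCompl_map_of_exact hπK hexK (h.compl i).codisjoint (h'.compl i) (hfF i)
    (map_baseChange_le f (map_slopeLE_le f hfφ _))

end Morphisms

theorem kernel_cokernel_mixedTate
    {M' : Type} [AddCommGroup M'] [Module K0 M']
    (σ : K0 →+* K0)
    (φ : M → M) (F : ℤ → Submodule K (K ⊗[K0] M))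
    (φ' : M' → M') (F' : ℤ → Submodule K (K ⊗[K0] M'))
    (hφ : IsSemilinear K0 σ φ) (hφ' : IsSemilinear K0 σ φ')
    (h : IsMixedTate p K0 K φ F) (h' : IsMixedTate p K0 K φ' F')
    (f : M →ₗ[K0] M')
    (hfφ : ∀ m, f (φ m) = φ' (f m))
    (hfF : ∀ i, Submodule.map (f.baseChange K) (F i) ≤ F' i) :
    -- the kernel of `f`, with the induced structures, is mixed Tate
    (∀ (L : Type) [AddCommGroup L] [Module K0 L] (ι : L →ₗ[K0] M)
       (φL : L → L) (FL : ℤ → Submodule K (K ⊗[K0] L)),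
       Function.Injective ι →
       LinearMap.range ι = LinearMap.ker f →
       (∀ l, ι (φL l) = φ (ι l)) →
       (∀ i, FL i = Submodule.comap (ι.baseChange K) (F i)) →
       IsMixedTate p K0 K φL FL) ∧
    -- the cokernel of `f`, with the induced structures, is mixed Tate
    (∀ (Q : Type) [AddCommGroup Q] [Module K0 Q] (π : M' →ₗ[K0] Q)
       (φQ : Q → Q) (FQ : ℤ → Submodule K (K ⊗[K0] Q)),
       Function.Surjective π →
       LinearMap.ker π = LinearMap.range f →
       (∀ m, π (φ' m) = φQ (π m)) →
       (∀ i, FQ i = Submodule.map (π.baseChange K) (F' i)) →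
       IsMixedTate p K0 K φQ FQ) :=
  ⟨fun _ _ _ _ _ _ hι hrange hιφ hFL => isMixedTate_of_ker hφ.toSemilinearMap hφ'.toSemilinearMap
      h h' f hfφ hfF hι hrange hιφ hFL,
    fun _ _ _ _ _ _ hπ hker hπφ hFQ => isMixedTate_of_coker φ hφ'.toSemilinearMap
      h h' f hfφ hfF hπ hker hπφ hFQ⟩

end MT
end

section
/- The assignment (M,φ,F) ↦ η(M,φ,F) is a tensor automorphism of the fibre functor ω̃ ⊗_{ℚ_p} K on the category of mixed Tate filtered φ-modules, i.e. it is functorial and satisfies η(M ⊗ M') = η(M) ⊗ η(M'). -/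
open scoped TensorProduct
open Function Module

namespace MT

variable (p : ℕ) (K0 K : Type) [Field K0] [Field K] [Algebra K0 K]

variable {M : Type} [AddCommGroup M] [Module K0 M]

/-!
Choose a basis of `φ`-eigenvectors adapted to the slope decomposition. Its base change grades
`M_K`, and `IsEta` says that `η` is unipotent for this grading (`η x - x` has lower degree) with
`η x ∈ F^{deg x}`. As `F^a` is a complement of the part of degree `< a`, descending induction on
the top degree gives `F^a ⊆ η(M_{≥ a} ⊗ K)` and shows that `η` is unique; functoriality follows.

For `M ⊗ M'` take the product eigenbasis, graded by total degree. Since the slope decomposition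
of `M` forbids nonzero solutions of `σ t = p^d t` with `d ≠ 0`, Artin's independence argument
shows that the slope parts of `φ ⊗ φ'` are exactly the total-degree pieces. Now `η ⊗ η'` is
unipotent and `F''^i ⊆ (η ⊗ η')(degree ≥ i)`, so `F''^i` meets the part of degree `< i` trivially;
hence `η ⊗ η'` has the defining property of `η(M ⊗ M')` and equals it by uniqueness.
-/

section DegreeFiltration

variable {ι R X : Type*} [Ring R] [AddCommGroup X] [Module R X] (b : Basis ι R X) (deg : ι → ℤ)

def degLE (j : ℤ) : Submodule R X := Submodule.span R (b '' {s | deg s ≤ j})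

def degGE (i : ℤ) : Submodule R X := Submodule.span R (b '' {s | i ≤ deg s})

def IsUnipotentWrt (H : X →ₗ[R] X) : Prop := ∀ s, H (b s) - b s ∈ degLE b deg (deg s - 1)

variable {b deg}

lemma degLE_mono : Monotone (degLE b deg) := fun _ _ hij =>
  Submodule.span_mono (Set.image_mono fun _ hs => le_trans hs hij)

lemma disjoint_degGE_degLE {i j : ℤ} (hji : j < i) : Disjoint (degGE b deg i) (degLE b deg j) :=
  b.linearIndependent.disjoint_span_image
    (Set.disjoint_left.mpr fun _ hi hj => by simp only [Set.mem_ofPred_eq] at hi hj; omega)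

lemma exists_mem_degLE (x : X) : ∃ j, x ∈ degLE b deg j := by
  obtain ⟨j, hj⟩ := ((b.repr x).support.image deg).bddAbove
  refine ⟨j, Submodule.span_mono (Set.image_mono fun s hs => ?_) (b.mem_span_repr_support x)⟩
  exact hj (Finset.mem_coe.mpr (Finset.mem_image_of_mem deg hs))

lemma degLE_succ_le (j : ℤ) :
    degLE b deg (j + 1) ≤ Submodule.span R (b '' {s | deg s = j + 1}) ⊔ degLE b deg j := by
  rw [degLE, degLE, ← Submodule.span_union, ← Set.image_union]
  exact Submodule.span_mono (Set.image_mono fun s hs => by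
    simp only [Set.mem_ofPred_eq, Set.mem_union] at hs ⊢; omega)

lemma IsUnipotentWrt.sub_mem_degLE {H : X →ₗ[R] X} (hH : IsUnipotentWrt b deg H) {j : ℤ} {x : X}
    (hx : x ∈ degLE b deg j) : H x - x ∈ degLE b deg (j - 1) := by
  have hle : degLE b deg j ≤ (degLE b deg (j - 1)).comap (H - LinearMap.id) := by
    refine Submodule.span_le.mpr ?_
    rintro _ ⟨s, hs, rfl⟩
    exact degLE_mono (by simp only [Set.mem_ofPred_eq] at hs; omega) (hH s)
  exact hle hx

/-- Descending induction on the top degree of `w`: while it is `≥ i`, `H w - w` has lower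
degree, hence so does `w`. -/
lemma IsUnipotentWrt.eq_zero_of_mem_degGE {H : X →ₗ[R] X} (hH : IsUnipotentWrt b deg H)
    {i : ℤ} {w : X} (hw : w ∈ degGE b deg i) (hHw : H w ∈ degLE b deg (i - 1)) : w = 0 := by
  obtain ⟨j, hj⟩ := exists_mem_degLE (b := b) (deg := deg) w
  have key : ∀ k, i - 1 ≤ k → w ∈ degLE b deg k → w = 0 := by
    intro k hk
    induction k, hk using Int.leInduction with
    | base => exact Submodule.disjoint_def.mp (disjoint_degGE_degLE (by omega)) w hw
    | succ k hk ih =>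
      intro hwk
      refine ih ?_
      have hlow := hH.sub_mem_degLE hwk
      rw [add_sub_cancel_right] at hlow
      rw [← sub_sub_cancel (H w) w]
      exact sub_mem (degLE_mono (by omega) hHw) hlow
  exact key _ (le_max_right j (i - 1)) (degLE_mono (le_max_left _ _) hj)

lemma IsUnipotentWrt.le_map_degGE {H : X →ₗ[R] X} (hH : IsUnipotentWrt b deg H)
    {F : Submodule R X} {a : ℤ} (hF : ∀ s, a ≤ deg s → H (b s) ∈ F)
    (hdisj : Disjoint F (degLE b deg (a - 1))) : F ≤ (degGE b deg a).map H := by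
  intro f hf
  obtain ⟨j, hj⟩ := exists_mem_degLE (b := b) (deg := deg) f
  have key : ∀ k, a - 1 ≤ k → ∀ f ∈ F, f ∈ degLE b deg k → f ∈ (degGE b deg a).map H := by
    intro k hk
    induction k, hk using Int.leInduction with
    | base =>
      intro f hf hfk
      rw [Submodule.disjoint_def.mp hdisj f hf hfk]
      exact zero_mem _
    | succ k hk ih =>
      intro f hf hfk
      obtain ⟨f₁, hf₁, f₂, hf₂, rfl⟩ := Submodule.mem_sup.mp (degLE_succ_le k hfk)
      have hf₁GE : f₁ ∈ degGE b deg a := Submodule.span_mono (Set.image_mono fun s hs => by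
        simp only [Set.mem_ofPred_eq] at hs ⊢; omega) hf₁
      have hHf₁ : H f₁ ∈ F := by
        refine (Submodule.span_le (p := F.comap H)).mpr ?_ hf₁
        rintro _ ⟨s, hs, rfl⟩
        exact hF s (by simp only [Set.mem_ofPred_eq] at hs; omega)
      have hf₁LE : f₁ ∈ degLE b deg (k + 1) := Submodule.span_mono (Set.image_mono fun s hs => by
        simp only [Set.mem_ofPred_eq] at hs ⊢; omega) hf₁
      have hlow := hH.sub_mem_degLE hf₁LE
      rw [add_sub_cancel_right] at hlow
      have hrest : f₁ + f₂ - H f₁ = f₂ - (H f₁ - f₁) := by abel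
      obtain ⟨g, hg, hHg⟩ := ih (f₁ + f₂ - H f₁) (sub_mem hf hHf₁)
        (hrest ▸ sub_mem hf₂ hlow)
      exact ⟨g + f₁, add_mem hg hf₁GE, by rw [map_add, hHg]; abel⟩
  exact key _ (le_max_right j (a - 1)) f hf (degLE_mono (le_max_left _ _) hj)

end DegreeFiltration

lemma map₂_span_image_le {R X Y Z ι κ ι' : Type*} [CommRing R] [AddCommGroup X] [Module R X]
    [AddCommGroup Y] [Module R Y] [AddCommGroup Z] [Module R Z] {v : ι → X} {v' : κ → Y}
    {w : ι' → Z} {g : X →ₗ[R] Y →ₗ[R] Z} {pair : ι → κ → ι'}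
    (hg : ∀ s t, g (v s) (v' t) = w (pair s t))
    {S : Set ι} {T : Set κ} {U : Set ι'} (hU : ∀ s ∈ S, ∀ t ∈ T, pair s t ∈ U) :
    Submodule.map₂ g (Submodule.span R (v '' S)) (Submodule.span R (v' '' T)) ≤
      Submodule.span R (w '' U) := by
  rw [Submodule.map₂_span_span]
  refine Submodule.span_mono ?_
  rintro _ ⟨_, ⟨s, hs, rfl⟩, _, ⟨t, ht, rfl⟩, rfl⟩
  exact ⟨pair s t, hU s hs t ht, (hg s t).symm⟩

lemma eq_of_sub_mem_of_disjoint {R X : Type*} [Ring R] [AddCommGroup X] [Module R X]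
    {P Q : Submodule R X} (hPQ : Disjoint P Q) {u v : X} (hu : u ∈ P) (hv : v ∈ P)
    (huv : u - v ∈ Q) : u = v :=
  sub_eq_zero.mp (Submodule.disjoint_def.mp hPQ _ (sub_mem hu hv) huv)

lemma baseChange_degLE {ι M : Type*} [AddCommGroup M] [Module K0 M] (b : Basis ι K0 M)
    (deg : ι → ℤ) (j : ℤ) :
    (degLE b deg j).baseChange K = degLE (Algebra.TensorProduct.basis K b) deg j := by
  rw [degLE, degLE, Submodule.baseChange_span, Set.image_image]
  simp only [TensorProduct.mk_apply, Algebra.TensorProduct.basis_apply]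

section SlopeBasis

variable {σ : K0 →+* K0}

/-- A basis of `φ`-eigenvectors refining the slope decomposition: `(M, φ) ≅ ⊕ (K0, p^{deg s} σ)`. -/
structure SlopeBasis (φ : M → M) where
  ι : Type
  basis : Basis ι K0 M
  deg : ι → ℤ
  apply_basis : ∀ s, φ (basis s) = (p : K0) ^ deg s • basis s
  slopePart_eq : ∀ n, slopePart p K0 φ n = Submodule.span K0 (basis '' {s | deg s = n})

variable {p K0} {φ : M → M}

lemma SlopeBasis.basis_mem_slopePart (B : SlopeBasis p K0 φ) (s : B.ι) :
    B.basis s ∈ slopePart p K0 φ (B.deg s) :=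
  Submodule.subset_span (B.apply_basis s)

lemma SlopeBasis.slopeLE_eq (B : SlopeBasis p K0 φ) (j : ℤ) :
    slopeLE p K0 φ j = degLE B.basis B.deg j := by
  refine le_antisymm (iSup₂_le fun n hn => ?_) (Submodule.span_le.mpr ?_)
  · rw [B.slopePart_eq]
    exact Submodule.span_mono (Set.image_mono fun s (hs : B.deg s = n) => (hs ▸ hn : B.deg s ≤ j))
  · rintro _ ⟨s, hs, rfl⟩
    exact (le_iSup₂_of_le (f := fun n (_ : n ≤ j) => slopePart p K0 φ n) (B.deg s) hs le_rfl :
      _ ≤ slopeLE p K0 φ j) (B.basis_mem_slopePart s)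

theorem exists_slopeBasis (hint : DirectSum.IsInternal (slopePart p K0 φ)) :
    Nonempty (SlopeBasis p K0 φ) := by
  classical
  choose S hS hspan hli using fun n : ℤ =>
    exists_linearIndependent K0 {m : M | φ m = (p : K0) ^ n • m}
  let v : ∀ n, Basis (S n) K0 (slopePart p K0 φ n) := fun n =>
    (Basis.span (hli n)).map (LinearEquiv.ofEq _ _ (by rw [Subtype.range_coe, hspan n]; rfl))
  have hv : ∀ s : Σ n, S n, hint.collectedBasis v s = s.2 := fun s => by
    simp [v, hint.collectedBasis_coe]
  refine ⟨⟨Σ n, S n, hint.collectedBasis v, Sigma.fst, fun s => ?_, fun n => ?_⟩⟩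
  · rw [hv]
    exact hS s.1 s.2.2
  · have himage : hint.collectedBasis v '' {s | s.1 = n} = S n := by
      ext m
      constructor
      · rintro ⟨⟨n', m', hm'⟩, rfl, rfl⟩
        simpa [hv] using hm'
      · intro hm
        exact ⟨⟨n, m, hm⟩, rfl, hv _⟩
    rw [himage, hspan n]
    rfl

lemma SlopeBasis.eq_zero_of_map_eq_zpow_mul (B : SlopeBasis p K0 φ) (hp : (p : K0) ≠ 0)
    (hφ : IsSemilinear K0 σ φ) (s : B.ι) {d : ℤ} (hd : d ≠ 0) {t : K0}
    (ht : σ t = (p : K0) ^ d * t) : t = 0 := by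
  have hhigh : t • B.basis s ∈ slopePart p K0 φ (B.deg s + d) := by
    refine Submodule.subset_span ?_
    rw [Set.mem_ofPred_eq, hφ.map_smul, B.apply_basis, ht, smul_smul, smul_smul, zpow_add₀ hp]
    ring_nf
  rw [B.slopePart_eq] at hhigh
  have hlow : t • B.basis s ∈ Submodule.span K0 (B.basis '' {s' | B.deg s' = B.deg s}) :=
    Submodule.smul_mem _ t (Submodule.subset_span ⟨s, rfl, rfl⟩)
  have hzero := Submodule.disjoint_def.mp (B.basis.linearIndependent.disjoint_span_image
    (Set.disjoint_left.mpr fun s' (h1 : _ = _) (h2 : _ = _) => hd (by omega))) _ hhigh hlow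
  exact (smul_eq_zero.mp hzero).resolve_right (B.basis.ne_zero s)

end SlopeBasis

section TensorSlopeBasis

variable {p K0} {σ : K0 →+* K0}

lemma IsSemilinear.repr_apply {ι V : Type} [AddCommGroup V] [Module K0 V] (c : Basis ι K0 V)
    {ψ : V → V} (hψ : IsSemilinear K0 σ ψ) {μ : ι → K0} (hμ : ∀ q, ψ (c q) = μ q • c q)
    (v : V) (q : ι) : c.repr (ψ v) q = σ (c.repr v q) * μ q := by
  induction c.mem_span v using Submodule.span_induction with
  | mem v hv =>
    obtain ⟨q', rfl⟩ := hv
    rw [hμ, c.repr.map_smul, c.repr_self]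
    by_cases hq : q' = q <;> simp [hq]
  | zero => simpa using congrArg (fun v => c.repr v q) (hψ.map_smul 0 0)
  | add v w _ _ hv hw => rw [hψ.map_add, c.repr.map_add, c.repr.map_add, Finsupp.add_apply,
      Finsupp.add_apply, hv, hw, σ.map_add, add_mul]
  | smul t v _ hv => rw [hψ.map_smul, c.repr.map_smul, c.repr.map_smul, Finsupp.smul_apply,
      Finsupp.smul_apply, smul_eq_mul, smul_eq_mul, hv, σ.map_mul, mul_assoc]

/-- Artin's argument: comparing coordinates, `σ t = p^(n - deg q) t` for the `q`-th coordinate `t`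
of a `p^n`-eigenvector. -/
lemma deg_eq_of_repr_ne_zero {ι V : Type} [AddCommGroup V] [Module K0 V] (c : Basis ι K0 V)
    (deg : ι → ℤ) (hp : (p : K0) ≠ 0) {ψ : V → V} (hψ : IsSemilinear K0 σ ψ)
    (hc : ∀ q, ψ (c q) = (p : K0) ^ deg q • c q)
    (hσ : ∀ d : ℤ, d ≠ 0 → ∀ t : K0, σ t = (p : K0) ^ d * t → t = 0)
    {n : ℤ} {v : V} (hv : ψ v = (p : K0) ^ n • v) {q : ι} (hq : c.repr v q ≠ 0) : deg q = n := by
  by_contra hne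
  refine hq (hσ (n - deg q) (sub_ne_zero.mpr (Ne.symm hne)) _ ?_)
  have hcoord := congrArg (fun w => c.repr w q) hv
  simp only [hψ.repr_apply c hc, map_smul, Finsupp.smul_apply, smul_eq_mul] at hcoord
  rw [zpow_sub₀ hp, div_mul_eq_mul_div, eq_div_iff (zpow_ne_zero _ hp), hcoord]

variable {M' : Type} [AddCommGroup M'] [Module K0 M']
variable {φ : M → M} {φ' : M' → M'} {φT : M ⊗[K0] M' → M ⊗[K0] M'}

lemma apply_tmul_of_eigen (hp : (p : K0) ≠ 0)
    (hφT : ∀ (m : M) (m' : M'), φT (m ⊗ₜ[K0] m') = φ m ⊗ₜ[K0] φ' m') {a b : ℤ} {m : M} {m' : M'}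
    (hm : φ m = (p : K0) ^ a • m) (hm' : φ' m' = (p : K0) ^ b • m') :
    φT (m ⊗ₜ[K0] m') = (p : K0) ^ (a + b) • (m ⊗ₜ[K0] m') := by
  rw [hφT, hm, hm', TensorProduct.smul_tmul_smul, zpow_add₀ hp]

def SlopeBasis.tensorDeg (B : SlopeBasis p K0 φ) (B' : SlopeBasis p K0 φ') (q : B.ι × B'.ι) : ℤ :=
  B.deg q.1 + B'.deg q.2

noncomputable def SlopeBasis.tensor (B : SlopeBasis p K0 φ) (B' : SlopeBasis p K0 φ')
    (hp : (p : K0) ≠ 0) (hφ : IsSemilinear K0 σ φ) (hφT : IsSemilinear K0 σ φT)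
    (hφT_tmul : ∀ (m : M) (m' : M'), φT (m ⊗ₜ[K0] m') = φ m ⊗ₜ[K0] φ' m') :
    SlopeBasis p K0 φT :=
  have apply_basis : ∀ q : B.ι × B'.ι, φT (B.basis.tensorProduct B'.basis q) =
      (p : K0) ^ B.tensorDeg B' q • B.basis.tensorProduct B'.basis q := fun q => by
    rw [Basis.tensorProduct_apply']
    exact apply_tmul_of_eigen hp hφT_tmul (B.apply_basis q.1) (B'.apply_basis q.2)
  { ι := B.ι × B'.ι
    basis := B.basis.tensorProduct B'.basis
    deg := B.tensorDeg B'
    apply_basis := apply_basis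
    slopePart_eq := fun n => by
      refine le_antisymm (Submodule.span_le.mpr fun v hv => ?_) (Submodule.span_le.mpr ?_)
      · refine (Basis.mem_span_image _).mpr fun q hq => ?_
        exact deg_eq_of_repr_ne_zero _ _ hp hφT apply_basis
          (fun _ => B.eq_zero_of_map_eq_zpow_mul hp hφ q.1) hv (Finsupp.mem_support_iff.mp hq)
      · rintro _ ⟨q, rfl, rfl⟩
        exact Submodule.subset_span (apply_basis q) }

end TensorSlopeBasis

section Eta

variable {p K0} {φ : M → M} {F : ℤ → Submodule K (K ⊗[K0] M)}

noncomputable def SlopeBasis.baseChange (B : SlopeBasis p K0 φ) : Basis B.ι K (K ⊗[K0] M) :=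
  Algebra.TensorProduct.basis K B.basis

lemma SlopeBasis.baseChange_apply (B : SlopeBasis p K0 φ) (s : B.ι) :
    B.baseChange K s = 1 ⊗ₜ[K0] B.basis s :=
  Algebra.TensorProduct.basis_apply _ _

lemma SlopeBasis.baseChange_slopeLE (B : SlopeBasis p K0 φ) (j : ℤ) :
    (slopeLE p K0 φ j).baseChange K = degLE (B.baseChange K) B.deg j := by
  rw [B.slopeLE_eq, baseChange_degLE]
  rfl

lemma SlopeBasis.disjoint_of_isMixedTate (B : SlopeBasis p K0 φ) (h : IsMixedTate p K0 K φ F)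
    (n : ℤ) : Disjoint (F n) (degLE (B.baseChange K) B.deg (n - 1)) := by
  rw [← B.baseChange_slopeLE K]
  exact (h.compl n).disjoint

variable {η : (K ⊗[K0] M) →ₗ[K] K ⊗[K0] M}

lemma SlopeBasis.isEta_apply (B : SlopeBasis p K0 φ) (hη : IsEta p K0 K φ F η) (s : B.ι) :
    η (B.baseChange K s) ∈ F (B.deg s) ∧
      η (B.baseChange K s) - B.baseChange K s ∈ degLE (B.baseChange K) B.deg (B.deg s - 1) := by
  rw [← B.baseChange_slopeLE K, B.baseChange_apply K]
  exact hη _ _ (Submodule.tmul_mem_baseChange_of_mem 1 (B.basis_mem_slopePart s))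

lemma SlopeBasis.isUnipotentWrt (B : SlopeBasis p K0 φ) (hη : IsEta p K0 K φ F η) :
    IsUnipotentWrt (B.baseChange K) B.deg η :=
  fun s => (B.isEta_apply K hη s).2

lemma SlopeBasis.apply_mem_degLE (B : SlopeBasis p K0 φ) (hη : IsEta p K0 K φ F η) (s : B.ι) :
    η (B.baseChange K s) ∈ degLE (B.baseChange K) B.deg (B.deg s) := by
  rw [← sub_add_cancel (η _) (B.baseChange K s)]
  exact add_mem (degLE_mono (by omega) (B.isEta_apply K hη s).2)
    (Submodule.subset_span ⟨s, (le_refl (B.deg s) : _), rfl⟩)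

lemma SlopeBasis.le_map_degGE (B : SlopeBasis p K0 φ) (h : IsMixedTate p K0 K φ F)
    (hη : IsEta p K0 K φ F η) (a : ℤ) : F a ≤ (degGE (B.baseChange K) B.deg a).map η :=
  (B.isUnipotentWrt K hη).le_map_degGE (fun s hs => h.antitone hs (B.isEta_apply K hη s).1)
    (B.disjoint_of_isMixedTate K h a)

variable {M' : Type} [AddCommGroup M'] [Module K0 M'] {φ' : M' → M'}

lemma SlopeBasis.map_basis_mem_slopePart (B : SlopeBasis p K0 φ) {f : M →ₗ[K0] M'}
    (hf : ∀ m, f (φ m) = φ' (f m)) (s : B.ι) : f (B.basis s) ∈ slopePart p K0 φ' (B.deg s) :=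
  Submodule.subset_span (by rw [Set.mem_ofPred_eq, ← hf, B.apply_basis, map_smul])

lemma SlopeBasis.map_degLE_le (B : SlopeBasis p K0 φ) {f : M →ₗ[K0] M'}
    (hf : ∀ m, f (φ m) = φ' (f m)) (j : ℤ) :
    (degLE (B.baseChange K) B.deg j).map (f.baseChange K) ≤ (slopeLE p K0 φ' j).baseChange K := by
  rw [degLE, Submodule.map_span_le]
  rintro _ ⟨s, hs, rfl⟩
  rw [B.baseChange_apply K, LinearMap.baseChange_tmul]
  exact Submodule.tmul_mem_baseChange_of_mem 1
    (le_iSup₂_of_le (f := fun n (_ : n ≤ j) => slopePart p K0 φ' n) (B.deg s) hs le_rfl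
      (B.map_basis_mem_slopePart hf s))

theorem SlopeBasis.eta_comp_baseChange (B : SlopeBasis p K0 φ) {F' : ℤ → Submodule K (K ⊗[K0] M')}
    (h' : IsMixedTate p K0 K φ' F') (hη : IsEta p K0 K φ F η)
    {η' : (K ⊗[K0] M') →ₗ[K] K ⊗[K0] M'} (hη' : IsEta p K0 K φ' F' η') {f : M →ₗ[K0] M'}
    (hf : ∀ m, f (φ m) = φ' (f m)) (hfF : ∀ i, (F i).map (f.baseChange K) ≤ F' i) :
    η' ∘ₗ f.baseChange K = f.baseChange K ∘ₗ η := by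
  refine (B.baseChange K).ext fun s => ?_
  rw [LinearMap.comp_apply, LinearMap.comp_apply]
  obtain ⟨hF, hlow⟩ := B.isEta_apply K hη s
  have hfs : f.baseChange K (B.baseChange K s) ∈ (slopePart p K0 φ' (B.deg s)).baseChange K := by
    rw [B.baseChange_apply K, LinearMap.baseChange_tmul]
    exact Submodule.tmul_mem_baseChange_of_mem 1 (B.map_basis_mem_slopePart hf s)
  obtain ⟨hF', hlow'⟩ := hη' _ _ hfs
  refine eq_of_sub_mem_of_disjoint (h'.compl _).disjoint hF' (hfF _ ⟨_, hF, rfl⟩) ?_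
  rw [← sub_sub_sub_cancel_right _ _ (f.baseChange K (B.baseChange K s)),
    ← map_sub (f.baseChange K)]
  exact sub_mem hlow' (B.map_degLE_le K hf _ ⟨_, hlow, rfl⟩)

end Eta

section Tensor

variable {p K0} {M' : Type} [AddCommGroup M'] [Module K0 M'] {φ : M → M} {φ' : M' → M'}

local notation "e" => TensorProduct.AlgebraTensorModule.distribBaseChange K0 K M M'

def tensorFiltration (F : ℤ → Submodule K (K ⊗[K0] M)) (F' : ℤ → Submodule K (K ⊗[K0] M'))
    (i : ℤ) : Submodule K (K ⊗[K0] (M ⊗[K0] M')) :=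
  ⨆ a : ℤ, Submodule.span K
    {z | ∃ x ∈ F a, ∃ y ∈ F' (i - a), z = (e).symm (x ⊗ₜ[K] y)}

variable (M M') in
noncomputable def tmulK : (K ⊗[K0] M) →ₗ[K] (K ⊗[K0] M') →ₗ[K] K ⊗[K0] (M ⊗[K0] M') :=
  (TensorProduct.mk K (K ⊗[K0] M) (K ⊗[K0] M')).compr₂ (e).symm.toLinearMap

variable (B : SlopeBasis p K0 φ) (B' : SlopeBasis p K0 φ')

noncomputable def SlopeBasis.tensorBaseChange : Basis (B.ι × B'.ι) K (K ⊗[K0] (M ⊗[K0] M')) :=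
  Algebra.TensorProduct.basis K (B.basis.tensorProduct B'.basis)

lemma tmulK_baseChange (s : B.ι) (t : B'.ι) :
    tmulK K M M' (B.baseChange K s) (B'.baseChange K t) = B.tensorBaseChange K B' (s, t) := by
  simp [tmulK, SlopeBasis.tensorBaseChange, SlopeBasis.baseChange_apply,
    Basis.tensorProduct_apply]

lemma map₂_degLE_le (j j' : ℤ) :
    Submodule.map₂ (tmulK K M M') (degLE (B.baseChange K) B.deg j)
        (degLE (B'.baseChange K) B'.deg j') ≤
      degLE (B.tensorBaseChange K B') (B.tensorDeg B') (j + j') :=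
  map₂_span_image_le (pair := Prod.mk) (tmulK_baseChange K B B') fun _ hs _ ht => by
    simp only [Set.mem_ofPred_eq, SlopeBasis.tensorDeg] at hs ht ⊢; omega

lemma map₂_degGE_le (i i' : ℤ) :
    Submodule.map₂ (tmulK K M M') (degGE (B.baseChange K) B.deg i)
        (degGE (B'.baseChange K) B'.deg i') ≤
      degGE (B.tensorBaseChange K B') (B.tensorDeg B') (i + i') :=
  map₂_span_image_le (pair := Prod.mk) (tmulK_baseChange K B B') fun _ hs _ ht => by
    simp only [Set.mem_ofPred_eq, SlopeBasis.tensorDeg] at hs ht ⊢; omega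

variable {F : ℤ → Submodule K (K ⊗[K0] M)} {F' : ℤ → Submodule K (K ⊗[K0] M')}
  {η : (K ⊗[K0] M) →ₗ[K] K ⊗[K0] M} {η' : (K ⊗[K0] M') →ₗ[K] K ⊗[K0] M'}

omit B B' in
lemma conj_map_tmulK (x : K ⊗[K0] M) (y : K ⊗[K0] M') :
    (e).symm.conj (TensorProduct.map η η') (tmulK K M M' x y) = tmulK K M M' (η x) (η' y) := by
  simp [tmulK, LinearEquiv.conj_apply]

lemma isUnipotentWrt_conj_map (hη : IsEta p K0 K φ F η) (hη' : IsEta p K0 K φ' F' η') :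
    IsUnipotentWrt (B.tensorBaseChange K B') (B.tensorDeg B')
      ((e).symm.conj (TensorProduct.map η η')) := by
  rintro ⟨s, t⟩
  set x := B.baseChange K s
  set y := B'.baseChange K t
  rw [← tmulK_baseChange K B B', conj_map_tmulK]
  have hsplit : tmulK K M M' (η x) (η' y) - tmulK K M M' x y =
      tmulK K M M' (η x - x) (η' y) + tmulK K M M' x (η' y - y) := by
    simp only [map_sub, LinearMap.sub_apply]
    abel
  rw [hsplit]
  refine add_mem (degLE_mono ?_ (map₂_degLE_le K B B' _ _ (Submodule.apply_mem_map₂ _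
    (B.isEta_apply K hη s).2 (B'.apply_mem_degLE K hη' t))))
    (degLE_mono ?_ (map₂_degLE_le K B B' _ _ (Submodule.apply_mem_map₂ _
    (Submodule.subset_span ⟨s, (le_refl (B.deg s) : _), rfl⟩) (B'.isEta_apply K hη' t).2)))
  all_goals simp only [SlopeBasis.tensorDeg]; omega

lemma tensorFiltration_le_map (h : IsMixedTate p K0 K φ F) (h' : IsMixedTate p K0 K φ' F')
    (hη : IsEta p K0 K φ F η) (hη' : IsEta p K0 K φ' F' η') (i : ℤ) :
    tensorFiltration K F F' i ≤ (degGE (B.tensorBaseChange K B') (B.tensorDeg B') i).map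
      ((e).symm.conj (TensorProduct.map η η')) := by
  refine iSup_le fun a => Submodule.span_le.mpr ?_
  rintro _ ⟨_, hx, _, hy, rfl⟩
  obtain ⟨u, hu, rfl⟩ := B.le_map_degGE K h hη a hx
  obtain ⟨v, hv, rfl⟩ := B'.le_map_degGE K h' hη' (i - a) hy
  refine ⟨tmulK K M M' u v, ?_, conj_map_tmulK K u v⟩
  simpa using map₂_degGE_le K B B' a (i - a) (Submodule.apply_mem_map₂ _ hu hv)

lemma disjoint_tensorFiltration (h : IsMixedTate p K0 K φ F) (h' : IsMixedTate p K0 K φ' F')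
    (hη : IsEta p K0 K φ F η) (hη' : IsEta p K0 K φ' F' η') (i : ℤ) :
    Disjoint (tensorFiltration K F F' i)
      (degLE (B.tensorBaseChange K B') (B.tensorDeg B') (i - 1)) := by
  refine Submodule.disjoint_def.mpr fun w hw hw' => ?_
  obtain ⟨u, hu, rfl⟩ := tensorFiltration_le_map K B B' h h' hη hη' i hw
  rw [(isUnipotentWrt_conj_map K B B' hη hη').eq_zero_of_mem_degGE hu hw', map_zero]

lemma conj_map_mem_tensorFiltration (hη : IsEta p K0 K φ F η) (hη' : IsEta p K0 K φ' F' η')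
    (q : B.ι × B'.ι) :
    (e).symm.conj (TensorProduct.map η η') (B.tensorBaseChange K B' q) ∈
      tensorFiltration K F F' (B.tensorDeg B' q) := by
  rw [← tmulK_baseChange K B B', conj_map_tmulK]
  refine Submodule.mem_iSup_of_mem (B.deg q.1)
    (Submodule.subset_span ⟨_, (B.isEta_apply K hη q.1).1, _, ?_, rfl⟩)
  simpa [SlopeBasis.tensorDeg] using (B'.isEta_apply K hη' q.2).1

theorem eta_tensor_eq {σ : K0 →+* K0} (hp : (p : K0) ≠ 0) (hφ : IsSemilinear K0 σ φ)
    {φT : M ⊗[K0] M' → M ⊗[K0] M'} (hφT : IsSemilinear K0 σ φT)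
    (hφT_tmul : ∀ (m : M) (m' : M'), φT (m ⊗ₜ[K0] m') = φ m ⊗ₜ[K0] φ' m')
    (h : IsMixedTate p K0 K φ F) (h' : IsMixedTate p K0 K φ' F')
    (hη : IsEta p K0 K φ F η) (hη' : IsEta p K0 K φ' F' η')
    {ηT : (K ⊗[K0] (M ⊗[K0] M')) →ₗ[K] K ⊗[K0] (M ⊗[K0] M')}
    (hηT : IsEta p K0 K φT (tensorFiltration K F F') ηT) :
    ηT = (e).symm.conj (TensorProduct.map η η') := by
  obtain ⟨B⟩ := exists_slopeBasis h.internal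
  obtain ⟨B'⟩ := exists_slopeBasis h'.internal
  let BT := B.tensor B' hp hφ hφT hφT_tmul
  refine (BT.baseChange K).ext fun q => ?_
  obtain ⟨hF, hlow⟩ := BT.isEta_apply K hηT q
  refine eq_of_sub_mem_of_disjoint (disjoint_tensorFiltration K B B' h h' hη hη' _) hF
    (conj_map_mem_tensorFiltration K B B' hη hη' q) ?_
  rw [← sub_sub_sub_cancel_right _ _ (BT.baseChange K q)]
  exact sub_mem hlow (isUnipotentWrt_conj_map K B B' hη hη' q)

end Tensor

theorem eta_tensor_automorphism
    {M' : Type} [AddCommGroup M'] [Module K0 M']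
    (σ : K0 →+* K0) (hp : (p : K0) ≠ 0)
    (φ : M → M) (F : ℤ → Submodule K (K ⊗[K0] M))
    (φ' : M' → M') (F' : ℤ → Submodule K (K ⊗[K0] M'))
    (hφ : IsSemilinear K0 σ φ)
    (h : IsMixedTate p K0 K φ F) (h' : IsMixedTate p K0 K φ' F')
    (η : (K ⊗[K0] M) →ₗ[K] K ⊗[K0] M) (hη : IsEta p K0 K φ F η)
    (η' : (K ⊗[K0] M') →ₗ[K] K ⊗[K0] M') (hη' : IsEta p K0 K φ' F' η') :
    -- functoriality: `η` commutes with (the base change of) any morphism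
    (∀ (f : M →ₗ[K0] M'),
      (∀ m, f (φ m) = φ' (f m)) →
      (∀ i, Submodule.map (f.baseChange K) (F i) ≤ F' i) →
      ∀ x, η' (f.baseChange K x) = f.baseChange K (η x)) ∧
    -- compatibility with the tensor product: `η(M ⊗ M') = η(M) ⊗ η(M')`
    (∀ (φT : M ⊗[K0] M' → M ⊗[K0] M')
       (FT : ℤ → Submodule K (K ⊗[K0] (M ⊗[K0] M'))),
      IsSemilinear K0 σ φT →
      (∀ (m : M) (m' : M'), φT (m ⊗ₜ[K0] m') = φ m ⊗ₜ[K0] φ' m') →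
      (∀ i : ℤ, FT i = ⨆ a : ℤ, Submodule.span K
        {z | ∃ x ∈ F a, ∃ y ∈ F' (i - a), z =
          (TensorProduct.AlgebraTensorModule.distribBaseChange K0 K M M').symm
            (x ⊗ₜ[K] y)}) →
      ∀ ηT : (K ⊗[K0] (M ⊗[K0] M')) →ₗ[K] K ⊗[K0] (M ⊗[K0] M'),
        IsEta p K0 K φT FT ηT →
        ∀ (x : K ⊗[K0] M) (y : K ⊗[K0] M'),
          ηT ((TensorProduct.AlgebraTensorModule.distribBaseChange K0 K M M').symm
              (x ⊗ₜ[K] y)) =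
            (TensorProduct.AlgebraTensorModule.distribBaseChange K0 K M M').symm
              (η x ⊗ₜ[K] η' y)) := by
  obtain ⟨B⟩ := exists_slopeBasis h.internal
  refine ⟨fun f hf hfF => LinearMap.congr_fun (B.eta_comp_baseChange K h' hη hη' hf hfF), ?_⟩
  intro φT FT hφT hφT_tmul hFT ηT hηT x y
  obtain rfl : FT = tensorFiltration K F F' := funext hFT
  rw [eta_tensor_eq K hp hφ hφT hφT_tmul h h' hη hη' hηT]
  simp [LinearEquiv.conj_apply]

end MT
end

section
/- Let log and log′ be two extensions of the canonical logarithm to K_0^× with values in K_0. There is a unique ring homomorphism δ : B_st → B_st with γ_{log′} ∘ δ = γ_{log}, and it is given by δ = exp(((log(x) - log′(x))/ν_K(x))·N) for any x ∈ K_0 \ 𝒪_{K_0}^×. -/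
open Function Polynomial

/-! Requiring `γ' ∘ δ = γ` forces `δ ℓ = ℓ + c` with `c = log up - log' up` (by injectivity of
`γ'`), and the universal property of `ℓ` provides exactly one such `δ`. As `B_st` is generated by
`ℓ` over `B_cris`, the additive, `B_cris`-linear map `b ↦ ∑ cᵏ/k! Nᵏ b` agrees with `δ` as soon as
it does on the powers `ℓⁿ`, where it is the binomial expansion of `(ℓ + c)ⁿ`. Finally
`(log x - log' x)/ν(x) = c` because `log - log'` is proportional to `ν`. -/

theorem aeval_surjective_of_existsUnique {R A : Type} [CommRing R] [CommRing A] [Algebra R A]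
    {ℓ : A} (huniv : ∀ (C : Type) [CommRing C] [Algebra R C] (c : C),
      ∃! f : A →ₐ[R] C, f ℓ = c) :
    Surjective (aeval (R := R) ℓ) := by
  obtain ⟨φ, hφ, -⟩ := huniv R[X] X
  have hsection : (aeval ℓ).comp φ = AlgHom.id R A :=
    (huniv A ℓ).unique (by simp [hφ]) rfl
  exact fun b => ⟨φ b, DFunLike.congr_fun hsection b⟩

namespace Derivation

variable {R A : Type*} [CommRing R] [CommRing A] [Algebra R A] (D : Derivation R A A)

theorem iterate_mul_of_apply_eq_zero {c : A} (hc : D c = 0) (k : ℕ) (b : A) :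
    (⇑D)^[k] (c * b) = c * (⇑D)^[k] b := by
  induction k generalizing b with
  | zero => rfl
  | succ k ih =>
    rw [iterate_succ_apply, iterate_succ_apply, leibniz, hc, smul_zero, add_zero, smul_eq_mul,
      ih]

theorem iterate_pow_of_apply_eq_one {ℓ : A} (hℓ : D ℓ = 1) (k n : ℕ) :
    (⇑D)^[k] (ℓ ^ n) = (n.descFactorial k : A) * ℓ ^ (n - k) := by
  induction k generalizing n with
  | zero => simp
  | succ k ih =>
    have hdesc : n * (n - 1).descFactorial k = n.descFactorial (k + 1) := by
      cases n with
      | zero => simp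
      | succ m => rw [Nat.succ_descFactorial_succ, Nat.add_sub_cancel]
    rw [iterate_succ_apply, leibniz_pow, hℓ, smul_eq_mul, mul_one, nsmul_eq_mul,
      D.iterate_mul_of_apply_eq_zero (D.map_natCast n), ih, ← mul_assoc, ← Nat.cast_mul, hdesc,
      Nat.sub_sub, add_comm 1 k]

theorem iterate_eq_zero_of_le {b : A} {k₀ k : ℕ} (hb : (⇑D)^[k₀] b = 0) (hk : k₀ ≤ k) :
    (⇑D)^[k] b = 0 := by
  rw [← Nat.sub_add_cancel hk, iterate_add_apply, hb, iterate_map_zero]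

variable [Algebra ℚ A]

/-- The Taylor expansion of `b` at `ℓ + c` when `D = d/dℓ`; for constant `c` it is `exp (c • D) b`.
As a `finsum` it is `0` unless finitely many terms are nonzero. -/
noncomputable def taylorSeries (c b : A) : A :=
  ∑ᶠ k : ℕ, ((k.factorial : ℚ)⁻¹) • (c ^ k * (⇑D)^[k] b)

theorem hasFiniteSupport_taylorSeries_term (hnil : ∀ b : A, ∃ k : ℕ, (⇑D)^[k] b = 0)
    (c b : A) : HasFiniteSupport fun k : ℕ => ((k.factorial : ℚ)⁻¹) • (c ^ k * (⇑D)^[k] b) := by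
  obtain ⟨k₀, hk₀⟩ := hnil b
  refine (Set.finite_Iio k₀).subset fun k hk => ?_
  by_contra hle
  refine hk ?_
  dsimp only
  rw [D.iterate_eq_zero_of_le hk₀ (not_lt.mp hle), mul_zero, smul_zero]

theorem taylorSeries_add (hnil : ∀ b : A, ∃ k : ℕ, (⇑D)^[k] b = 0) (c x y : A) :
    D.taylorSeries c (x + y) = D.taylorSeries c x + D.taylorSeries c y := by
  rw [taylorSeries, taylorSeries, taylorSeries, ← finsum_add_distrib
    (D.hasFiniteSupport_taylorSeries_term hnil c x) (D.hasFiniteSupport_taylorSeries_term hnil c y)]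
  simp only [iterate_map_add, mul_add, smul_add]

theorem taylorSeries_mul_of_apply_eq_zero (hnil : ∀ b : A, ∃ k : ℕ, (⇑D)^[k] b = 0)
    {d : A} (hd : D d = 0) (c x : A) :
    D.taylorSeries c (d * x) = d * D.taylorSeries c x := by
  rw [taylorSeries, taylorSeries, mul_finsum' _ _ (D.hasFiniteSupport_taylorSeries_term hnil c x)]
  refine finsum_congr fun k => ?_
  rw [D.iterate_mul_of_apply_eq_zero hd, mul_left_comm, mul_smul_comm]

theorem taylorSeries_pow {ℓ : A} (hℓ : D ℓ = 1) (c : A) (n : ℕ) :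
    D.taylorSeries c (ℓ ^ n) = (ℓ + c) ^ n := by
  have hsupp : support (fun k : ℕ => ((k.factorial : ℚ)⁻¹) • (c ^ k * (⇑D)^[k] (ℓ ^ n))) ⊆
      Finset.range (n + 1) := fun k hk => by
    by_contra hkn
    refine hk ?_
    dsimp only
    rw [D.iterate_pow_of_apply_eq_one hℓ, Nat.descFactorial_eq_zero_iff_lt.mpr (by simp_all),
      Nat.cast_zero, zero_mul, mul_zero, smul_zero]
  rw [taylorSeries, finsum_eq_finsetSum_of_support_subset _ hsupp, add_comm ℓ c, add_pow]
  refine Finset.sum_congr rfl fun k _ => ?_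
  have hchoose : ((k.factorial : ℚ)⁻¹) * (n.descFactorial k : ℚ) = n.choose k := by
    rw [Nat.descFactorial_eq_factorial_mul_choose, Nat.cast_mul, ← mul_assoc,
      inv_mul_cancel₀ (by positivity), one_mul]
  rw [D.iterate_pow_of_apply_eq_one hℓ, Algebra.smul_def,
    ← _root_.map_natCast (algebraMap ℚ A) (n.descFactorial k),
    ← _root_.map_natCast (algebraMap ℚ A) (n.choose k), ← hchoose, map_mul]
  ring

theorem eq_taylorSeries_of_apply_eq_add (hnil : ∀ b : A, ∃ k : ℕ, (⇑D)^[k] b = 0) {ℓ c : A}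
    (hℓ : D ℓ = 1) (hgen : Surjective (aeval (R := R) ℓ)) (f : A →ₐ[R] A)
    (hf : f ℓ = ℓ + c) (b : A) : f b = D.taylorSeries c b := by
  obtain ⟨p, rfl⟩ := hgen b
  induction p using Polynomial.induction_on' with
  | add p q hp hq => rw [map_add, map_add, D.taylorSeries_add hnil, hp, hq]
  | monomial n r =>
    rw [aeval_monomial, map_mul, AlgHom.commutes, map_pow, hf,
      D.taylorSeries_mul_of_apply_eq_zero hnil (D.map_algebraMap r), D.taylorSeries_pow hℓ]

end Derivation

/-- Let `log, log′ : K_0^× → K_0` be two extensions of the canonical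
logarithm (so `log - log′` vanishes on units and factors through the valuation `ν`).
`B_st` is an affine line over `B_cris`, generated by the element `ℓ = log_st(p̃)`,
carries the `B_cris`-linear monodromy derivation `N` with `N(ℓ) = 1` which is locally
nilpotent, and the embeddings `γ_log, γ_log′ : B_st → B_dR` are the `B_cris`-algebra
maps with `γ_log(ℓ) = log_dR([p̃]/p) + log(p)`, `γ_log′(ℓ) = log_dR([p̃]/p) + log′(p)`
(so that `γ_log′(ℓ) - γ_log(ℓ) = log′(p) - log(p)`), with `γ_log′` injective.
Then there is a unique ring homomorphism `δ : B_st → B_st` (of `B_cris`-algebras)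
with `γ_log′ ∘ δ = γ_log`, and it is given by
`δ = exp( ((log x - log′ x)/ν(x)) · N )` for every `x ∈ K_0 \ 𝒪_{K_0}^×`. -/
theorem delta_log_log'
    (K0 Bcris Bst BdR : Type)
    [Field K0] [CommRing Bcris] [CommRing Bst] [CommRing BdR]
    [Algebra ℚ Bst] [Algebra K0 Bcris] [Algebra Bcris Bst] [Algebra Bcris BdR]
    (ν : Additive K0ˣ →+ ℤ)
    (lg lg' : K0ˣ → K0)
    -- `log - log′` is proportional to the valuation (they agree on the units)
    (hprop : ∀ x y : K0ˣ, ((ν (Additive.ofMul y) : ℤ) : K0) * (lg x - lg' x) =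
      ((ν (Additive.ofMul x) : ℤ) : K0) * (lg y - lg' y))
    (ℓ : Bst)
    -- `Spec B_st` is a 1-dimensional affine space over `Spec B_cris`, with
    -- coordinate `ℓ = log_st(p̃)`
    (huniv : ∀ (C : Type) [CommRing C] [Algebra Bcris C] (c : C),
      ∃! f : Bst →ₐ[Bcris] C, f ℓ = c)
    -- the monodromy operator: a locally nilpotent `B_cris`-linear derivation with
    -- `N ℓ = 1`
    (N : Bst →ₗ[Bcris] Bst)
    (hNder : ∀ a b : Bst, N (a * b) = a * N b + b * N a)
    (hNℓ : N ℓ = 1)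
    (hnil : ∀ b : Bst, ∃ k : ℕ, (⇑N)^[k] b = 0)
    (γ γ' : Bst →ₐ[Bcris] BdR)
    (hinj : Function.Injective γ')
    (up : K0ˣ) (hup : ν (Additive.ofMul up) = 1)
    (hγγ' : γ' ℓ - γ ℓ =
      algebraMap Bcris BdR (algebraMap K0 Bcris (lg' up - lg up))) :
    ∃! δ : Bst →ₐ[Bcris] Bst,
      γ'.comp δ = γ ∧
      ∀ x : K0ˣ, ν (Additive.ofMul x) ≠ 0 →
        ∀ b : Bst, δ b = ∑ᶠ k : ℕ, ((k.factorial : ℚ)⁻¹) •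
          ((algebraMap Bcris Bst (algebraMap K0 Bcris
              ((lg x - lg' x) / ((ν (Additive.ofMul x) : ℤ) : K0)))) ^ k *
            (⇑N)^[k] b) := by
  set c := algebraMap Bcris Bst (algebraMap K0 Bcris (lg up - lg' up))
  obtain ⟨δ, hδℓ, hδ_unique⟩ := huniv Bst (ℓ + c)
  have hγ'_shift : γ' (ℓ + c) = γ ℓ := by
    rw [map_add, AlgHom.commutes]
    simp only [map_sub] at hγγ' ⊢
    linear_combination hγγ'
  have hcomp : γ'.comp δ = γ :=
    (huniv BdR (γ ℓ)).unique (by rw [AlgHom.comp_apply, hδℓ, hγ'_shift]) rfl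
  let D : Derivation Bcris Bst Bst := Derivation.mk' N (by simpa only [smul_eq_mul] using hNder)
  refine ⟨δ, ⟨hcomp, fun x hx b => ?_⟩, fun δ' ⟨hcomp', _⟩ => hδ_unique δ' (hinj ?_)⟩
  · rcases subsingleton_or_nontrivial Bst with _ | _
    · exact Subsingleton.elim _ _
    have : CharZero Bst := algebraRat.charZero Bst
    have : CharZero K0 := ((algebraMap Bcris Bst).comp (algebraMap K0 Bcris)).charZero
    have hslope : (lg x - lg' x) / (ν (Additive.ofMul x) : K0) = lg up - lg' up := by
      rw [div_eq_iff (Int.cast_ne_zero.mpr hx)]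
      have h := hprop x up
      rw [hup, Int.cast_one, one_mul] at h
      linear_combination h
    rw [hslope]
    exact D.eq_taylorSeries_of_apply_eq_add hnil hNℓ (aeval_surjective_of_existsUnique huniv)
      δ hδℓ b
  · rw [← AlgHom.comp_apply, hcomp', hγ'_shift]
end
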